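/- In ℚ[[q]] the identity f(q) = 1 + ((−q;q)_∞)^{−1} · ∑_{n=1}^∞ (−1)^{n−1} q^n · (−q^{n+1};q)_∞ holds, where f(q) = ∑_{n=0}^∞ q^{n²} · (∏_{j=1}^{n}(1+q^j))^{−2}. -/

import Mathlib

open PowerSeries

/-- The coefficientwise sum of a family of formal power series; it agrees with
the sum of the family whenever `coeff N (f n) = 0` for `n > N` (so that the
partial sums converge coefficientwise in the `q`-adic topology). -/
noncomputable def seriesSum {R : Type*} [CommRing R] (f : ℕ → PowerSeries R) : PowerSeries R :=
  PowerSeries.mk fun N => ∑ n ∈ Finset.range (N + 1), PowerSeries.coeff (R := R) N (f n)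

/-- The coefficientwise infinite product of a family of formal power series;
it agrees with the product of the family whenever each factor `f k` is
`1 + (terms of order > k)` (so that the partial products converge
coefficientwise in the `q`-adic topology). -/
noncomputable def seriesProd {R : Type*} [CommRing R] (f : ℕ → PowerSeries R) : PowerSeries R :=
  PowerSeries.mk fun N => PowerSeries.coeff (R := R) N (∏ k ∈ Finset.range (N + 1), f k)

/-- Ramanujan's third order mock theta function `f(q)`. -/
noncomputable def mockF : PowerSeries ℚ :=
  seriesSum fun n =>
    (X : PowerSeries ℚ) ^ (n ^ 2)
      * Ring.inverse (∏ j ∈ Finset.range n, (1 + X ^ (j + 1))) ^ 2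

/-!
Put `f_K = ∑ q^(n²+Kn) / ((-q;q)_n (-q^(K+1);q)_n)` and `g_K = ∑ (-1)^n q^((K+1)n) / (-q;q)_n`,
so that `f = f_0`. Termwise telescoping gives `(1 + q^(K+1)) f_K + f_(K+1) = 2 (1 + q^(K+1))` and
`(1 + q^(K+1)) g_K + g_(K+1) = 2`, hence `E_K = f_K + g_K - 2` satisfies
`E_K = (-1)^K (-q;q)_K E_0`. As `f_K ≡ g_K ≡ 1 mod q^(K+1)`, `E_0` is divisible by every power
of `q`, so `f = 1 + (1 - g_0)`. Finally `(-q;q)_∞ (1 - g_0)` is the stated sum, because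
`(-q;q)_∞ = (-q;q)_n (-q^(n+1);q)_∞`.
-/

open Finset
open scoped Ring

variable {R : Type*} [CommRing R]

namespace PowerSeries

lemma eq_zero_of_forall_X_pow_dvd {f : R⟦X⟧} (h : ∀ m, X ^ m ∣ f) : f = 0 := by
  ext N
  exact X_pow_dvd_iff.mp (h (N + 1)) N N.lt_succ_self

lemma eq_of_forall_X_pow_dvd_sub {f g : R⟦X⟧} (h : ∀ m, X ^ m ∣ f - g) : f = g :=
  sub_eq_zero.mp (eq_zero_of_forall_X_pow_dvd h)

end PowerSeries

lemma Ring.inverse_eq_mul_inverse_of_mul_eq {M₀ : Type*} [CommMonoidWithZero M₀] {a b c : M₀}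
    (hc : IsUnit c) (h : a * c = b) : a⁻¹ʳ = c * b⁻¹ʳ := by
  rw [← h, Ring.mul_inverse_rev, Ring.mul_inverse_cancel_left _ _ hc]

section seriesSum

lemma coeff_seriesSum (f : ℕ → R⟦X⟧) (N : ℕ) :
    coeff N (seriesSum f) = ∑ n ∈ range (N + 1), coeff N (f n) :=
  coeff_mk _ _

variable {f g : ℕ → R⟦X⟧}

lemma seriesSum_add : seriesSum (fun n => f n + g n) = seriesSum f + seriesSum g := by
  ext N
  simp only [coeff_seriesSum, map_add, sum_add_distrib]

lemma seriesSum_sub : seriesSum (fun n => f n - g n) = seriesSum f - seriesSum g := by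
  ext N
  simp only [coeff_seriesSum, map_sub, sum_sub_distrib]

lemma seriesSum_neg : seriesSum (fun n => -f n) = -seriesSum f := by
  ext N
  simp only [coeff_seriesSum, map_neg, sum_neg_distrib]

lemma X_pow_dvd_seriesSum {m : ℕ} (hf : ∀ n, X ^ m ∣ f n) : X ^ m ∣ seriesSum f := by
  refine X_pow_dvd_iff.mpr fun d hd => ?_
  rw [coeff_seriesSum]
  exact sum_eq_zero fun n _ => X_pow_dvd_iff.mp (hf n) d hd

lemma X_pow_dvd_seriesSum_sub_sum (hf : ∀ n, X ^ n ∣ f n) (m : ℕ) :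
    X ^ m ∣ seriesSum f - ∑ n ∈ range m, f n := by
  refine X_pow_dvd_iff.mpr fun d hd => ?_
  obtain ⟨k, rfl⟩ := Nat.exists_eq_add_of_lt hd
  have htail : X ^ (d + 1) ∣ ∑ x ∈ range k, f (d + 1 + x) :=
    dvd_sum fun x _ => (pow_dvd_pow X (Nat.le_add_right _ x)).trans (hf _)
  rw [map_sub, sub_eq_zero, coeff_seriesSum, show d + k + 1 = d + 1 + k by omega,
    sum_range_add (fun n => f n), map_add, map_sum, X_pow_dvd_iff.mp htail d d.lt_succ_self,
    add_zero]

lemma mul_seriesSum (hf : ∀ n, X ^ n ∣ f n) (a : R⟦X⟧) :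
    a * seriesSum f = seriesSum fun n => a * f n := by
  refine eq_of_forall_X_pow_dvd_sub fun m => ?_
  have := dvd_sub ((X_pow_dvd_seriesSum_sub_sum hf m).mul_left a)
    (X_pow_dvd_seriesSum_sub_sum (fun n => (hf n).mul_left a) m)
  convert this using 1
  rw [mul_sub, mul_sum]
  abel

lemma seriesSum_eq_add_seriesSum_succ (hf : ∀ n, X ^ n ∣ f n) :
    seriesSum f = f 0 + seriesSum fun n => f (n + 1) := by
  refine eq_of_forall_X_pow_dvd_sub fun m => ?_
  have hf' : ∀ n, X ^ n ∣ f (n + 1) := fun n => (pow_dvd_pow X n.le_succ).trans (hf _)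
  have := dvd_sub ((pow_dvd_pow X m.le_succ).trans (X_pow_dvd_seriesSum_sub_sum hf (m + 1)))
    (X_pow_dvd_seriesSum_sub_sum hf' m)
  convert this using 1
  rw [sum_range_succ']
  abel

lemma seriesSum_telescope {v : ℕ → R⟦X⟧} (hv : ∀ n, X ^ n ∣ v n)
    (hfv : ∀ n, f n = v n - v (n + 1)) : seriesSum f = v 0 := by
  rw [funext hfv, seriesSum_sub, seriesSum_eq_add_seriesSum_succ hv, add_sub_cancel_right]

end seriesSum

section seriesProd

variable {g : ℕ → R⟦X⟧}

lemma X_pow_dvd_prod_range_sub (hg : ∀ k, X ^ (k + 1) ∣ g k - 1) {m M : ℕ} (hmM : m ≤ M) :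
    X ^ m ∣ ∏ k ∈ range M, g k - ∏ k ∈ range m, g k := by
  induction M, hmM using Nat.le_induction with
  | base => simp
  | succ M hmM ih =>
    have hM : X ^ m ∣ (∏ k ∈ range M, g k) * (g M - 1) :=
      ((pow_dvd_pow X (by omega)).trans (hg M)).mul_left _
    convert dvd_add ih hM using 1
    rw [prod_range_succ]
    ring

lemma X_pow_dvd_seriesProd_sub_prod (hg : ∀ k, X ^ (k + 1) ∣ g k - 1) (M : ℕ) :
    X ^ M ∣ seriesProd g - ∏ k ∈ range M, g k := by
  refine X_pow_dvd_iff.mpr fun d hd => ?_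
  rw [map_sub, seriesProd, coeff_mk, ← map_sub]
  exact X_pow_dvd_iff.mp (dvd_sub_comm.mp (X_pow_dvd_prod_range_sub hg hd)) d d.lt_succ_self

lemma seriesProd_eq_prod_mul_seriesProd_add (hg : ∀ k, X ^ (k + 1) ∣ g k - 1) (t : ℕ) :
    seriesProd g = (∏ k ∈ range t, g k) * seriesProd fun j => g (t + j) := by
  have hg' : ∀ j, X ^ (j + 1) ∣ g (t + j) - 1 :=
    fun j => (pow_dvd_pow X (by omega)).trans (hg (t + j))
  refine eq_of_forall_X_pow_dvd_sub fun m => ?_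
  have := dvd_sub
    ((pow_dvd_pow X (Nat.le_add_left m t)).trans (X_pow_dvd_seriesProd_sub_prod hg (t + m)))
    ((X_pow_dvd_seriesProd_sub_prod hg' m).mul_left (∏ k ∈ range t, g k))
  convert this using 1
  rw [prod_range_add]
  ring

lemma isUnit_seriesProd (hg : ∀ k, X ^ (k + 1) ∣ g k - 1) : IsUnit (seriesProd g) := by
  have h := X_pow_dvd_iff.mp (X_pow_dvd_seriesProd_sub_prod hg 1) 0 one_pos
  rw [prod_range_one, map_sub, sub_eq_zero] at h
  have h0 := X_pow_dvd_iff.mp (hg 0) 0 one_pos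
  rw [map_sub, sub_eq_zero] at h0
  rw [isUnit_iff_constantCoeff, ← coeff_zero_eq_constantCoeff_apply, h, h0, coeff_zero_one]
  exact isUnit_one

end seriesProd

/-- `(-q^(K+1); q)_n`. -/
noncomputable def negQPoch (K n : ℕ) : R⟦X⟧ :=
  ∏ j ∈ range n, (1 + X ^ (K + 1 + j))

lemma negQPoch_zero_left (n : ℕ) :
    (negQPoch 0 n : R⟦X⟧) = ∏ j ∈ range n, (1 + X ^ (j + 1)) := by
  simp only [negQPoch, zero_add, add_comm 1]

lemma negQPoch_zero_right (K : ℕ) : (negQPoch K 0 : R⟦X⟧) = 1 := prod_range_zero _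

lemma negQPoch_succ (K n : ℕ) :
    (negQPoch K (n + 1) : R⟦X⟧) = negQPoch K n * (1 + X ^ (K + 1 + n)) :=
  prod_range_succ _ _

lemma negQPoch_succ' (K n : ℕ) :
    (negQPoch K (n + 1) : R⟦X⟧) = (1 + X ^ (K + 1)) * negQPoch (K + 1) n := by
  rw [negQPoch, prod_range_succ', mul_comm, add_zero]
  exact congrArg _ (prod_congr rfl fun j _ => by ring_nf)

lemma isUnit_one_add_X_pow {k : ℕ} (hk : k ≠ 0) : IsUnit (1 + X ^ k : R⟦X⟧) := by
  rw [isUnit_iff_constantCoeff]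
  simp [zero_pow hk]

lemma isUnit_negQPoch (K n : ℕ) : IsUnit (negQPoch K n : R⟦X⟧) := by
  rw [isUnit_iff_constantCoeff, negQPoch, map_prod]
  simp

lemma inverse_negQPoch_succ (n : ℕ) :
    (negQPoch 0 n : R⟦X⟧)⁻¹ʳ = (1 + X ^ (n + 1)) * (negQPoch 0 (n + 1))⁻¹ʳ :=
  Ring.inverse_eq_mul_inverse_of_mul_eq (isUnit_one_add_X_pow n.succ_ne_zero)
    (by rw [negQPoch_succ, zero_add, add_comm 1 n])

noncomputable def mockFGen (K : ℕ) : R⟦X⟧ :=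
  seriesSum fun n => X ^ (n ^ 2 + K * n) * (negQPoch 0 n * negQPoch K n)⁻¹ʳ

noncomputable def altSeries (K : ℕ) : R⟦X⟧ :=
  seriesSum fun n => (-1) ^ n * X ^ ((K + 1) * n) * (negQPoch 0 n)⁻¹ʳ

lemma mockFGen_term_telescope (K n : ℕ) :
    (1 + X ^ (K + 1)) * (X ^ (n ^ 2 + K * n) * (negQPoch 0 n * negQPoch K n)⁻¹ʳ)
        + X ^ (n ^ 2 + (K + 1) * n) * (negQPoch 0 n * negQPoch (K + 1) n)⁻¹ʳ
      = (1 + X ^ (K + 1)) * X ^ (n ^ 2 + K * n)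
          * ((1 + X ^ n) * (negQPoch 0 n * negQPoch K n)⁻¹ʳ)
        - (1 + X ^ (K + 1)) * X ^ ((n + 1) ^ 2 + K * (n + 1))
          * ((1 + X ^ (n + 1)) * (negQPoch 0 (n + 1) * negQPoch K (n + 1))⁻¹ʳ : R⟦X⟧) := by
  set e := (negQPoch 0 n * negQPoch K (n + 1) : R⟦X⟧)⁻¹ʳ
  have h₁ : (negQPoch 0 n * negQPoch K n : R⟦X⟧)⁻¹ʳ = (1 + X ^ (K + 1 + n)) * e :=
    Ring.inverse_eq_mul_inverse_of_mul_eq (isUnit_one_add_X_pow (by omega))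
      (by rw [negQPoch_succ, mul_assoc])
  have h₂ : (negQPoch 0 n * negQPoch (K + 1) n : R⟦X⟧)⁻¹ʳ = (1 + X ^ (K + 1)) * e :=
    Ring.inverse_eq_mul_inverse_of_mul_eq (isUnit_one_add_X_pow (by omega))
      (by rw [negQPoch_succ', mul_assoc, mul_comm (negQPoch (K + 1) n)])
  have h₃ : e = (1 + X ^ (n + 1)) * (negQPoch 0 (n + 1) * negQPoch K (n + 1) : R⟦X⟧)⁻¹ʳ :=
    Ring.inverse_eq_mul_inverse_of_mul_eq (isUnit_one_add_X_pow (by omega))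
      (by rw [negQPoch_succ 0 n]; ring)
  rw [h₁, h₂, ← h₃]
  ring

lemma altSeries_term_telescope (K n : ℕ) :
    (1 + X ^ (K + 1)) * ((-1) ^ n * X ^ ((K + 1) * n) * (negQPoch 0 n)⁻¹ʳ)
        + (-1) ^ n * X ^ ((K + 1 + 1) * n) * (negQPoch 0 n)⁻¹ʳ
      = (-1) ^ n * X ^ ((K + 1) * n) * ((1 + X ^ n) * (negQPoch 0 n)⁻¹ʳ)
        - (-1) ^ (n + 1) * X ^ ((K + 1) * (n + 1))
          * ((1 + X ^ (n + 1)) * (negQPoch 0 (n + 1))⁻¹ʳ : R⟦X⟧) := by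
  rw [← inverse_negQPoch_succ]
  ring

lemma mockFGen_functional_eq (K : ℕ) :
    (1 + X ^ (K + 1)) * mockFGen K + mockFGen (K + 1) = (2 * (1 + X ^ (K + 1)) : R⟦X⟧) := by
  have hle (n : ℕ) : n ≤ n ^ 2 + K * n := (Nat.le_self_pow two_ne_zero n).trans le_self_add
  rw [mockFGen, mockFGen, mul_seriesSum fun n => dvd_mul_of_dvd_left (pow_dvd_pow X (hle n)) _,
    ← seriesSum_add, seriesSum_telescope (fun n => ?_) (mockFGen_term_telescope K)]
  · simp only [zero_pow two_ne_zero, mul_zero, add_zero, pow_zero, mul_one, negQPoch_zero_right,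
      Ring.inverse_one]
    ring
  · exact dvd_mul_of_dvd_left ((pow_dvd_pow X (hle n)).mul_left _) _

lemma altSeries_functional_eq (K : ℕ) :
    (1 + X ^ (K + 1)) * altSeries K + altSeries (K + 1) = (2 : R⟦X⟧) := by
  have hle (n : ℕ) : n ≤ (K + 1) * n := Nat.le_mul_of_pos_left n K.succ_pos
  rw [altSeries, altSeries,
    mul_seriesSum fun n => dvd_mul_of_dvd_left ((pow_dvd_pow X (hle n)).mul_left _) _,
    ← seriesSum_add, seriesSum_telescope (fun n => ?_) (altSeries_term_telescope K)]
  · simp only [pow_zero, mul_zero, mul_one, negQPoch_zero_right, Ring.inverse_one, one_mul]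
    exact one_add_one_eq_two
  · exact dvd_mul_of_dvd_left ((pow_dvd_pow X (hle n)).mul_left _) _

lemma X_pow_dvd_mockFGen_sub_one (K : ℕ) : X ^ (K + 1) ∣ (mockFGen K - 1 : R⟦X⟧) := by
  have hle (n : ℕ) : n ≤ n ^ 2 + K * n := (Nat.le_self_pow two_ne_zero n).trans le_self_add
  rw [mockFGen,
    seriesSum_eq_add_seriesSum_succ fun n => dvd_mul_of_dvd_left (pow_dvd_pow X (hle n)) _]
  simp only [negQPoch_zero_right, mul_one, Ring.inverse_one, zero_pow two_ne_zero, mul_zero,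
    add_zero, pow_zero, add_sub_cancel_left]
  exact X_pow_dvd_seriesSum fun n => dvd_mul_of_dvd_left (pow_dvd_pow X (by nlinarith)) _

lemma X_pow_dvd_altSeries_sub_one (K : ℕ) : X ^ (K + 1) ∣ (altSeries K - 1 : R⟦X⟧) := by
  have hle (n : ℕ) : n ≤ (K + 1) * n := Nat.le_mul_of_pos_left n K.succ_pos
  rw [altSeries,
    seriesSum_eq_add_seriesSum_succ fun n =>
      dvd_mul_of_dvd_left ((pow_dvd_pow X (hle n)).mul_left _) _]
  simp only [negQPoch_zero_right, mul_one, Ring.inverse_one, mul_zero, pow_zero,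
    add_sub_cancel_left]
  exact X_pow_dvd_seriesSum fun n =>
    dvd_mul_of_dvd_left ((pow_dvd_pow X (Nat.le_mul_of_pos_right _ n.succ_pos)).mul_left _) _

lemma mockFGen_zero_add_altSeries_zero : mockFGen 0 + altSeries 0 = (2 : R⟦X⟧) := by
  set G : ℕ → R⟦X⟧ := fun K => mockFGen K + altSeries K - 2
  have hG_succ (K : ℕ) : G (K + 1) = -(1 + X ^ (K + 1)) * G K := by
    linear_combination mockFGen_functional_eq (R := R) K + altSeries_functional_eq (R := R) K
  have hG_eq (K : ℕ) : G K = (-1) ^ K * negQPoch 0 K * G 0 := by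
    induction K with
    | zero => simp [negQPoch_zero_right]
    | succ K ih => rw [hG_succ, ih, negQPoch_succ]; ring
  refine sub_eq_zero.mp (eq_zero_of_forall_X_pow_dvd fun K => ?_)
  have hK : X ^ (K + 1) ∣ G K := by
    convert dvd_add (X_pow_dvd_mockFGen_sub_one (R := R) K) (X_pow_dvd_altSeries_sub_one K)
      using 1
    ring
  rw [hG_eq] at hK
  exact (pow_dvd_pow X K.le_succ).trans
    ((((isUnit_neg_one (α := R⟦X⟧)).pow K |>.mul (isUnit_negQPoch 0 K)).dvd_mul_left).mp hK)

lemma one_sub_altSeries_zero :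
    (1 - altSeries 0 : R⟦X⟧)
      = seriesSum fun m => (-1) ^ m * X ^ (m + 1) * (negQPoch 0 (m + 1))⁻¹ʳ := by
  rw [altSeries, seriesSum_eq_add_seriesSum_succ fun n =>
    dvd_mul_of_dvd_left ((pow_dvd_pow X (by omega)).mul_left _) _]
  simp only [negQPoch_zero_right, mul_one, Ring.inverse_one, mul_zero, pow_zero,
    sub_add_cancel_left, ← seriesSum_neg]
  congr 1
  funext m
  ring

lemma X_pow_dvd_one_add_X_pow_sub_one (k : ℕ) : (X : R⟦X⟧) ^ k ∣ 1 + X ^ k - 1 := by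
  rw [add_sub_cancel_left]

lemma seriesProd_mul_one_sub_altSeries_zero :
    seriesProd (fun k => 1 + X ^ (k + 1)) * (1 - altSeries 0 : R⟦X⟧)
      = seriesSum fun m => (-1 : R⟦X⟧) ^ (m + 1 - 1) * X ^ (m + 1)
          * seriesProd fun j => 1 + X ^ (m + 1 + 1 + j) := by
  rw [one_sub_altSeries_zero, mul_seriesSum fun n =>
    dvd_mul_of_dvd_left ((pow_dvd_pow X n.le_succ).mul_left _) _]
  congr 1
  funext m
  rw [seriesProd_eq_prod_mul_seriesProd_add
      (fun k => X_pow_dvd_one_add_X_pow_sub_one (k + 1)) (m + 1),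
    ← negQPoch_zero_left, Nat.add_sub_cancel]
  simp_rw [add_right_comm (m + 1) _ 1]
  linear_combination ((-1) ^ m * X ^ (m + 1) * seriesProd fun j => 1 + X ^ (m + 1 + 1 + j))
    * Ring.mul_inverse_cancel _ (isUnit_negQPoch (R := R) 0 (m + 1))

lemma mockF_eq_mockFGen_zero : mockF = mockFGen 0 := by
  rw [mockF, mockFGen]
  congr 1
  funext n
  rw [negQPoch_zero_left, zero_mul, add_zero, ← sq, Ring.inverse_pow]

/-- Theorem 3.7 (Fine): `f(q) = 1 + (1/(-q;q)_∞) ∑_{n≥1} (-1)^{n-1} q^n (-q^{n+1};q)_∞`. -/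
theorem stmt13 :
    mockF =
      1 + Ring.inverse (seriesProd (fun k => 1 + (X : PowerSeries ℚ) ^ (k + 1)))
        * seriesSum (fun m =>
            (-1 : PowerSeries ℚ) ^ (m + 1 - 1) * X ^ (m + 1)
              * seriesProd (fun j => 1 + X ^ (m + 1 + 1 + j))) := by
  rw [← seriesProd_mul_one_sub_altSeries_zero, Ring.inverse_mul_cancel_left _ _
    (isUnit_seriesProd fun k => X_pow_dvd_one_add_X_pow_sub_one (k + 1)), mockF_eq_mockFGen_zero]
  linear_combination mockFGen_zero_add_altSeries_zero (R := ℚ)
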